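/- arXiv:2205.02688 — 6 statements merged into one kernel-verified Lean document; each statement's English description precedes it below -/
import Mathlib

section
/- Let π : X → Y be a linear quotient map from a normed space X to a topological space Y, ψ : Y → X a section of π with ψ(ȳ) = x̂, and α ∈ (0,1]. For λ ∈ ℝ⁺, let H_{λψ, λx̂, α} be the set of sections w of (1/λ)π with w(ȳ) = λx̂ that are intrinsically Hölder with respect to λψ at λx̂ (with some constant). Then if φ ∈ H_{δ₁ψ, δ₁x̂, α} and η ∈ H_{δ₂ψ, δ₂x̂, α} for δ₁, δ₂ ∈ ℝ⁺, the sum φ + η belongs to H_{(δ₁+δ₂)ψ, (δ₁+δ₂)x̂, α}. In particular, for φ, η ∈ H_{ψ, x̂, α} with constants L_φ, L_η, the map w = φ + η satisfies ‖w(y) − 2ψ(y)‖ ≤ 2^{1−α}·max{L_φ, L_η}·‖2ψ(ȳ) − 2ψ(y)‖^α + ‖2ψ(ȳ) − 2ψ(y)‖ for all y ∈ Y, so w ∈ H_{2ψ, 2x̂, α}. Together with closure under nonzero scalar multiplication, the union ⋃_{λ∈ℝ⁺} H_{λψ, λx̂, α} ∪ {0} is a vector space over ℝ. -/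
/-!
Summing the two Hölder estimates with the triangle inequality gives the bound
`L₁ (δ₁ d)^α + L₂ (δ₂ d)^α + (δ₁ + δ₂) d` with `d = ‖ψ ȳ - ψ y‖`; since `t ↦ t^α` is monotone,
both powers are at most `((δ₁ + δ₂) d)^α`. For `δ₁ = δ₂ = 1` one keeps `d^α` instead and uses
`2 d^α = 2^(1-α) (2 d)^α`.
-/

section IntrinsicHolder

variable {X Y : Type*} [NormedAddCommGroup X] [NormedSpace ℝ X]

-- Only the estimate; the normalisation `φ ȳ = x̂` and the section property are kept apart.
def IsIntrinsicHolderAt (φ ψ : Y → X) (ybar : Y) (L α : ℝ) : Prop :=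
  ∀ y, ‖φ y - ψ y‖ ≤ L * ‖ψ ybar - ψ y‖ ^ α + ‖ψ ybar - ψ y‖

lemma norm_smul_sub_smul_of_nonneg {c : ℝ} (hc : 0 ≤ c) (u v : X) :
    ‖c • u - c • v‖ = c * ‖u - v‖ := by
  rw [← smul_sub, norm_smul, Real.norm_of_nonneg hc]

variable {φ η ψ : Y → X} {ybar : Y} {L₁ L₂ α δ₁ δ₂ : ℝ}

lemma IsIntrinsicHolderAt.norm_add_sub_le (hφ : IsIntrinsicHolderAt φ (δ₁ • ψ) ybar L₁ α)
    (hη : IsIntrinsicHolderAt η (δ₂ • ψ) ybar L₂ α) (hδ₁ : 0 ≤ δ₁) (hδ₂ : 0 ≤ δ₂) (y : Y) :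
    ‖(φ + η) y - ((δ₁ + δ₂) • ψ) y‖ ≤
      L₁ * (δ₁ * ‖ψ ybar - ψ y‖) ^ α + L₂ * (δ₂ * ‖ψ ybar - ψ y‖) ^ α
        + (δ₁ + δ₂) * ‖ψ ybar - ψ y‖ := by
  have hφy := hφ y
  have hηy := hη y
  simp only [Pi.smul_apply, norm_smul_sub_smul_of_nonneg hδ₁,
    norm_smul_sub_smul_of_nonneg hδ₂] at hφy hηy
  calc ‖(φ + η) y - ((δ₁ + δ₂) • ψ) y‖
      = dist (φ y + η y) (δ₁ • ψ y + δ₂ • ψ y) := by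
        rw [dist_eq_norm, Pi.add_apply, Pi.smul_apply, add_smul]
    _ ≤ ‖φ y - δ₁ • ψ y‖ + ‖η y - δ₂ • ψ y‖ := by
        simpa only [dist_eq_norm] using dist_add_add_le (φ y) (η y) (δ₁ • ψ y) (δ₂ • ψ y)
    _ ≤ _ := by linarith

lemma IsIntrinsicHolderAt.add (hφ : IsIntrinsicHolderAt φ (δ₁ • ψ) ybar L₁ α)
    (hη : IsIntrinsicHolderAt η (δ₂ • ψ) ybar L₂ α) (hδ₁ : 0 ≤ δ₁) (hδ₂ : 0 ≤ δ₂)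
    (hL₁ : 0 ≤ L₁) (hL₂ : 0 ≤ L₂) (hα : 0 ≤ α) :
    IsIntrinsicHolderAt (φ + η) ((δ₁ + δ₂) • ψ) ybar (L₁ + L₂) α := by
  intro y
  set d := ‖ψ ybar - ψ y‖
  have hd : 0 ≤ d := norm_nonneg _
  have hpow₁ : (δ₁ * d) ^ α ≤ ((δ₁ + δ₂) * d) ^ α := by gcongr; linarith
  have hpow₂ : (δ₂ * d) ^ α ≤ ((δ₁ + δ₂) * d) ^ α := by gcongr; linarith
  rw [Pi.smul_apply, Pi.smul_apply, norm_smul_sub_smul_of_nonneg (by linarith)]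
  calc ‖(φ + η) y - ((δ₁ + δ₂) • ψ) y‖
      ≤ L₁ * (δ₁ * d) ^ α + L₂ * (δ₂ * d) ^ α + (δ₁ + δ₂) * d :=
        hφ.norm_add_sub_le hη hδ₁ hδ₂ y
    _ ≤ (L₁ + L₂) * ((δ₁ + δ₂) * d) ^ α + (δ₁ + δ₂) * d := by
        linarith [mul_le_mul_of_nonneg_left hpow₁ hL₁, mul_le_mul_of_nonneg_left hpow₂ hL₂]

lemma IsIntrinsicHolderAt.add_self (hφ : IsIntrinsicHolderAt φ ψ ybar L₁ α)
    (hη : IsIntrinsicHolderAt η ψ ybar L₂ α) :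
    IsIntrinsicHolderAt (φ + η) ((2 : ℝ) • ψ) ybar (2 ^ (1 - α) * max L₁ L₂) α := by
  intro y
  set d := ‖ψ ybar - ψ y‖
  have hdα : 0 ≤ d ^ α := Real.rpow_nonneg (norm_nonneg _) α
  have htwo : (2 : ℝ) ^ (1 - α) * 2 ^ α = 2 := by
    rw [← Real.rpow_add two_pos, sub_add_cancel, Real.rpow_one]
  have hsum : L₁ + L₂ ≤ 2 * max L₁ L₂ := by
    linarith [le_max_left L₁ L₂, le_max_right L₁ L₂]
  rw [← one_smul ℝ ψ] at hφ hη
  rw [Pi.smul_apply, Pi.smul_apply, norm_smul_sub_smul_of_nonneg zero_le_two,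
    Real.mul_rpow zero_le_two (norm_nonneg _)]
  calc ‖(φ + η) y - ((2 : ℝ) • ψ) y‖
      = ‖(φ + η) y - (((1 : ℝ) + 1) • ψ) y‖ := by norm_num
    _ ≤ L₁ * (1 * d) ^ α + L₂ * (1 * d) ^ α + (1 + 1) * d :=
        hφ.norm_add_sub_le hη zero_le_one zero_le_one y
    _ ≤ 2 * max L₁ L₂ * d ^ α + 2 * d := by
        rw [one_mul]; linarith [mul_le_mul_of_nonneg_right hsum hdα]
    _ = (2 ^ (1 - α) * 2 ^ α) * max L₁ L₂ * d ^ α + 2 * d := by rw [htwo]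
    _ = 2 ^ (1 - α) * max L₁ L₂ * (2 ^ α * d ^ α) + 2 * d := by ring

end IntrinsicHolder

lemma IsLinearMap.one_div_smul_map_add_eq {X Y : Type*} [AddCommGroup X] [Module ℝ X]
    [AddCommGroup Y] [Module ℝ Y] {π : X → Y} (hπ : IsLinearMap ℝ π) {a b : X} {y : Y}
    {c₁ c₂ : ℝ} (hc₁ : 0 < c₁) (hc₂ : 0 < c₂)
    (ha : (1 / c₁) • π a = y) (hb : (1 / c₂) • π b = y) :
    (1 / (c₁ + c₂)) • π (a + b) = y := by
  rw [one_div, inv_smul_eq_iff₀ hc₁.ne'] at ha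
  rw [one_div, inv_smul_eq_iff₀ hc₂.ne'] at hb
  rw [one_div, inv_smul_eq_iff₀ (add_pos hc₁ hc₂).ne', hπ.map_add, ha, hb, add_smul]

theorem stmt7_general {X Y : Type*} [NormedAddCommGroup X] [NormedSpace ℝ X]
    [AddCommGroup Y] [Module ℝ Y]
    (π : X → Y) (hπlin : IsLinearMap ℝ π)
    (α : ℝ) (hα : α ∈ Set.Ioc (0:ℝ) 1)
    (ψ : Y → X) (ybar : Y) (xhat : X)
    (δ₁ δ₂ : ℝ) (hδ₁ : 0 < δ₁) (hδ₂ : 0 < δ₂)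
    (φ η : Y → X)
    (hφsec : ∀ y, (1 / δ₁) • π (φ y) = y) (hηsec : ∀ y, (1 / δ₂) • π (η y) = y)
    (hφy : φ ybar = δ₁ • xhat) (hηy : η ybar = δ₂ • xhat)
    (Lφ Lη : ℝ) (hLφ : 0 < Lφ) (hLη : 0 < Lη)
    (hφ : ∀ y : Y, ‖φ y - δ₁ • ψ y‖ ≤
      Lφ * ‖δ₁ • ψ ybar - δ₁ • ψ y‖ ^ α + ‖δ₁ • ψ ybar - δ₁ • ψ y‖)
    (hη : ∀ y : Y, ‖η y - δ₂ • ψ y‖ ≤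
      Lη * ‖δ₂ • ψ ybar - δ₂ • ψ y‖ ^ α + ‖δ₂ • ψ ybar - δ₂ • ψ y‖) :
    (∀ y, (1 / (δ₁ + δ₂)) • π (φ y + η y) = y) ∧
    (φ ybar + η ybar = (δ₁ + δ₂) • xhat) ∧
    (∃ L > 0, ∀ y : Y, ‖(φ y + η y) - (δ₁ + δ₂) • ψ y‖ ≤
      L * ‖(δ₁ + δ₂) • ψ ybar - (δ₁ + δ₂) • ψ y‖ ^ α
        + ‖(δ₁ + δ₂) • ψ ybar - (δ₁ + δ₂) • ψ y‖) ∧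
    (δ₁ = 1 → δ₂ = 1 → ∀ y : Y, ‖(φ y + η y) - (2:ℝ) • ψ y‖ ≤
      2 ^ (1 - α) * max Lφ Lη * ‖(2:ℝ) • ψ ybar - (2:ℝ) • ψ y‖ ^ α
        + ‖(2:ℝ) • ψ ybar - (2:ℝ) • ψ y‖) := by
  have hφ' : IsIntrinsicHolderAt φ (δ₁ • ψ) ybar Lφ α := hφ
  have hη' : IsIntrinsicHolderAt η (δ₂ • ψ) ybar Lη α := hη
  refine ⟨fun y ↦ hπlin.one_div_smul_map_add_eq hδ₁ hδ₂ (hφsec y) (hηsec y),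
    by rw [hφy, hηy, add_smul],
    ⟨Lφ + Lη, add_pos hLφ hLη, hφ'.add hη' hδ₁.le hδ₂.le hLφ.le hLη.le hα.1.le⟩, ?_⟩
  rintro rfl rfl
  rw [one_smul] at hφ' hη'
  exact hφ'.add_self hη'

/-- Sums of sections that are intrinsically Hölder with respect to `δ₁ψ` at `δ₁x̂` and
`δ₂ψ` at `δ₂x̂` are intrinsically Hölder with respect to `(δ₁+δ₂)ψ` at `(δ₁+δ₂)x̂`; in
particular for `δ₁ = δ₂ = 1` one has the explicit bound with constant
`2^(1-α)·max{L_φ, L_η}`. -/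
theorem stmt7 {X Y : Type*} [NormedAddCommGroup X] [NormedSpace ℝ X]
    [AddCommGroup Y] [Module ℝ Y] [TopologicalSpace Y]
    (π : X → Y) (hπlin : IsLinearMap ℝ π)
    (hπc : Continuous π) (hπo : IsOpenMap π) (hπs : Function.Surjective π)
    (α : ℝ) (hα : α ∈ Set.Ioc (0:ℝ) 1)
    (ψ : Y → X) (hψ : ∀ y, π (ψ y) = y) (ybar : Y) (xhat : X) (hxhat : ψ ybar = xhat)
    (δ₁ δ₂ : ℝ) (hδ₁ : 0 < δ₁) (hδ₂ : 0 < δ₂)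
    (φ η : Y → X)
    (hφsec : ∀ y, (1 / δ₁) • π (φ y) = y) (hηsec : ∀ y, (1 / δ₂) • π (η y) = y)
    (hφy : φ ybar = δ₁ • xhat) (hηy : η ybar = δ₂ • xhat)
    (Lφ Lη : ℝ) (hLφ : 0 < Lφ) (hLη : 0 < Lη)
    (hφ : ∀ y : Y, ‖φ y - δ₁ • ψ y‖ ≤
      Lφ * ‖δ₁ • ψ ybar - δ₁ • ψ y‖ ^ α + ‖δ₁ • ψ ybar - δ₁ • ψ y‖)
    (hη : ∀ y : Y, ‖η y - δ₂ • ψ y‖ ≤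
      Lη * ‖δ₂ • ψ ybar - δ₂ • ψ y‖ ^ α + ‖δ₂ • ψ ybar - δ₂ • ψ y‖) :
    (∀ y, (1 / (δ₁ + δ₂)) • π (φ y + η y) = y) ∧
    (φ ybar + η ybar = (δ₁ + δ₂) • xhat) ∧
    (∃ L > 0, ∀ y : Y, ‖(φ y + η y) - (δ₁ + δ₂) • ψ y‖ ≤
      L * ‖(δ₁ + δ₂) • ψ ybar - (δ₁ + δ₂) • ψ y‖ ^ α
        + ‖(δ₁ + δ₂) • ψ ybar - (δ₁ + δ₂) • ψ y‖) ∧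
    (δ₁ = 1 → δ₂ = 1 → ∀ y : Y, ‖(φ y + η y) - (2:ℝ) • ψ y‖ ≤
      2 ^ (1 - α) * max Lφ Lη * ‖(2:ℝ) • ψ ybar - (2:ℝ) • ψ y‖ ^ α
        + ‖(2:ℝ) • ψ ybar - (2:ℝ) • ψ y‖) :=
  stmt7_general π hπlin α hα ψ ybar xhat δ₁ δ₂ hδ₁ hδ₂ φ η hφsec hηsec hφy hηy Lφ Lη hLφ hLη hφ hη
end

section
/- Let π : X → Y be a quotient map, X geodesic with boundedness constant k finite, and let φ₀ : Y → X be an intrinsically (L,α)-Hölder section satisfying d(φ₀(y₁), φ₀(y₂)) ≤ L·d(φ₀(y₁), π⁻¹(y₂))^α. Let φ : Y → X be a section of π with φ(y₀) = φ₀(y₀) =: x₀. If there exist L₁ ≥ 1 and β ∈ (0,1) such that d(φ(y), φ₀(y)) ≤ L₁·d(φ₀(ŷ), φ₀(y))^β + d(φ₀(ŷ), φ₀(y)) for all y ∈ Y (where φ₀(ŷ) = x₀), then there exists L₂ ≥ 1 (explicitly, L₂ = L·K·(L₁+1) where K depends on L, k) such that d(φ(y), x₀) ≤ L₂·d(x₀,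 π⁻¹(y))^{βα} for all y ∈ Y. -/
/-!
By the triangle inequality through `φ₀ y`, `d(φ y, x₀) ≤ L₁ t^β + 2t` with `t = d(x₀, φ₀ y)`,
and the Hölder bound for `φ₀` gives `t ≤ L D^α` with `D = d(x₀, π⁻¹ y) ≤ k`. Both terms are then
controlled by `D^(βα)`: the first by raising `t ≤ L D^α` to the power `β`, the second because
`D^α = D^(αβ) D^(α(1-β))` and the last factor is bounded by `max k 1`.
-/

open Metric Set

namespace Real

theorem rpow_le_mul_rpow_of_le_mul {t s L β : ℝ} (ht : 0 ≤ t) (hs : 0 ≤ s) (hL : 1 ≤ L)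
    (hβ₀ : 0 ≤ β) (hβ₁ : β ≤ 1) (h : t ≤ L * s) : t ^ β ≤ L * s ^ β :=
  calc t ^ β ≤ (L * s) ^ β := rpow_le_rpow ht h hβ₀
    _ = L ^ β * s ^ β := mul_rpow (by linarith) hs
    _ ≤ L * s ^ β := by gcongr; exact rpow_le_self_of_one_le hL hβ₁

theorem rpow_le_mul_rpow_of_le {D M γ δ : ℝ} (hD : 0 ≤ D) (hDM : D ≤ M) (hM : 1 ≤ M)
    (hγ : 0 ≤ γ) (hγδ : γ ≤ δ) (hδ : δ ≤ γ + 1) : D ^ δ ≤ M * D ^ γ :=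
  calc D ^ δ = D ^ (δ - γ) * D ^ γ := by
        rw [← rpow_add_of_nonneg hD (by linarith) hγ, sub_add_cancel]
    _ ≤ M ^ (δ - γ) * D ^ γ := by gcongr
    _ ≤ M * D ^ γ := by gcongr; exact rpow_le_self_of_one_le hM (by linarith)

end Real

theorem add_two_mul_le_mul_rpow_of_le_mul_rpow {t D L M L₁ α β : ℝ} (ht : 0 ≤ t) (hD : 0 ≤ D)
    (hDM : D ≤ M) (hM : 1 ≤ M) (hL : 1 ≤ L) (hL₁ : 0 ≤ L₁) (hα₀ : 0 ≤ α) (hα₁ : α ≤ 1) (hβ₀ : 0 ≤ β)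
    (hβ₁ : β ≤ 1) (htD : t ≤ L * D ^ α) :
    L₁ * t ^ β + 2 * t ≤ (L₁ * L + 2 * L * M) * D ^ (β * α) := by
  have hpow : t ^ β ≤ L * D ^ (β * α) := by
    rw [mul_comm β α, Real.rpow_mul hD]
    exact Real.rpow_le_mul_rpow_of_le_mul ht (by positivity) hL hβ₀ hβ₁ htD
  have hlin : t ≤ L * (M * D ^ (β * α)) := htD.trans <| by
    gcongr
    exact Real.rpow_le_mul_rpow_of_le hD hDM hM (by positivity)
      (mul_le_of_le_one_left hα₀ hβ₁) (by nlinarith [mul_nonneg hβ₀ hα₀])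
  nlinarith [mul_le_mul_of_nonneg_left hpow hL₁]

theorem stmt9_general {X Y : Type*} [MetricSpace X]
    (π : X → Y)
    (φ₀ : Y → X)
    (L α : ℝ) (hL : 1 ≤ L) (hα : α ∈ Set.Ioo (0:ℝ) 1)
    (k : ℝ) (hk : ∀ y₁ y₂ : Y, infDist (φ₀ y₁) (π ⁻¹' {y₂}) ≤ k)
    (hφ₀ : ∀ y₁ y₂ : Y, dist (φ₀ y₁) (φ₀ y₂) ≤ L * (infDist (φ₀ y₁) (π ⁻¹' {y₂})) ^ α)
    (φ : Y → X)
    (y₀ : Y)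
    (L₁ β : ℝ) (hL₁ : 1 ≤ L₁) (hβ : β ∈ Set.Ioo (0:ℝ) 1)
    (hφ : ∀ y : Y, dist (φ y) (φ₀ y) ≤
      L₁ * (dist (φ₀ y₀) (φ₀ y)) ^ β + dist (φ₀ y₀) (φ₀ y)) :
    ∃ L₂ ≥ (1:ℝ), ∀ y : Y,
      dist (φ y) (φ₀ y₀) ≤ L₂ * (infDist (φ₀ y₀) (π ⁻¹' {y})) ^ (β * α) := by
  have hM : (1:ℝ) ≤ max k 1 := le_max_right _ _
  refine ⟨L₁ * L + 2 * L * max k 1, by nlinarith, fun y ↦ ?_⟩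
  calc dist (φ y) (φ₀ y₀) ≤ dist (φ y) (φ₀ y) + dist (φ₀ y₀) (φ₀ y) :=
        dist_comm (φ₀ y₀) (φ₀ y) ▸ dist_triangle _ _ _
    _ ≤ L₁ * dist (φ₀ y₀) (φ₀ y) ^ β + 2 * dist (φ₀ y₀) (φ₀ y) := by linarith [hφ y]
    _ ≤ _ := add_two_mul_le_mul_rpow_of_le_mul_rpow dist_nonneg infDist_nonneg
        ((hk y₀ y).trans (le_max_left _ _)) hM hL (by linarith) hα.1.le hα.2.le hβ.1.le hβ.2.le
        (hφ₀ y₀ y)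

/-- If `φ` is intrinsically `(L₁,β)`-Hölder with respect to an intrinsically
`(L,α)`-Hölder section `φ₀` at `x₀ = φ₀ y₀ = φ y₀`, then
`d(φ y, x₀) ≤ L₂ · d(x₀, π⁻¹ y)^(βα)` for some constant `L₂ ≥ 1`. -/
theorem stmt9 {X Y : Type*} [MetricSpace X] [TopologicalSpace Y]
    (π : X → Y) (hπc : Continuous π) (hπo : IsOpenMap π) (hπs : Function.Surjective π)
    (hgeo : ∀ x z : X, ∀ n : ℕ, 0 < n → ∃ p : ℕ → X, p 0 = x ∧ p n = z ∧
      ∀ i < n, dist (p i) (p (i + 1)) = dist x z / n)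
    (φ₀ : Y → X) (hsec₀ : ∀ y, π (φ₀ y) = y)
    (L α : ℝ) (hL : 1 ≤ L) (hα : α ∈ Set.Ioo (0:ℝ) 1)
    (k : ℝ) (hk : ∀ y₁ y₂ : Y, infDist (φ₀ y₁) (π ⁻¹' {y₂}) ≤ k)
    (hφ₀ : ∀ y₁ y₂ : Y, dist (φ₀ y₁) (φ₀ y₂) ≤ L * (infDist (φ₀ y₁) (π ⁻¹' {y₂})) ^ α)
    (φ : Y → X) (hsec : ∀ y, π (φ y) = y)
    (y₀ : Y) (hy₀ : φ y₀ = φ₀ y₀)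
    (L₁ β : ℝ) (hL₁ : 1 ≤ L₁) (hβ : β ∈ Set.Ioo (0:ℝ) 1)
    (hφ : ∀ y : Y, dist (φ y) (φ₀ y) ≤
      L₁ * (dist (φ₀ y₀) (φ₀ y)) ^ β + dist (φ₀ y₀) (φ₀ y)) :
    ∃ L₂ ≥ (1:ℝ), ∀ y : Y,
      dist (φ y) (φ₀ y₀) ≤ L₂ * (infDist (φ₀ y₀) (π ⁻¹' {y})) ^ (β * α) :=
  stmt9_general π φ₀ L α hL hα k hk hφ₀ φ y₀ L₁ β hL₁ hβ hφ
end

section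
/- Let π : X → Y be an open map between a metric space X and a topological space Y, K ⊆ X a compact set, and y ∈ Y. Then π is uniformly open on K ∩ π⁻¹(y): for every ε > 0 there exists a neighborhood U_ε of y such that U_ε ⊆ π(B(x,ε)) for every x ∈ K ∩ π⁻¹(y). -/
open Metric Set

/-- An open map `π` is uniformly open on `K ∩ π⁻¹ y` for a compact set `K`: for every
`ε > 0` there is a neighborhood `U` of `y` with `U ⊆ π(B(x,ε))` for all `x ∈ K ∩ π⁻¹ y`. -/
theorem stmt11 {X Y : Type*} [MetricSpace X] [TopologicalSpace Y]
    (π : X → Y) (hπc : Continuous π) (hπo : IsOpenMap π)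
    (K : Set X) (hK : IsCompact K) (y : Y) :
    ∀ ε > 0, ∃ U : Set Y, IsOpen U ∧ y ∈ U ∧
      ∀ x ∈ K ∩ π ⁻¹' {y}, U ⊆ π '' ball x ε := by
  classical
  intro ε hε
  obtain ⟨t, htK, hcov⟩ := hK.elim_nhds_subcover (fun x => ball x (ε / 2))
    (fun x _ => ball_mem_nhds x (by linarith))
  set s := t.filter (fun x => y ∈ π '' ball x (ε / 2)) with hs
  refine ⟨⋂ x ∈ s, π '' ball x (ε / 2), ?_, ?_, ?_⟩
  · exact isOpen_biInter_finset fun x _ => hπo _ isOpen_ball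
  · exact mem_iInter₂.2 fun x hx => (Finset.mem_filter.1 hx).2
  · rintro x ⟨hxK, hxy⟩ z hz
    obtain ⟨x₀, hx₀t, hx₀⟩ := mem_iUnion₂.1 (hcov hxK)
    have hmem : x₀ ∈ s := Finset.mem_filter.2 ⟨hx₀t, ⟨x, hx₀, hxy⟩⟩
    have hz' : z ∈ π '' ball x₀ (ε / 2) := mem_iInter₂.1 hz x₀ hmem
    refine image_mono (f := π) ?_ hz'
    intro w hw
    have : dist w x < ε := by
      calc dist w x ≤ dist w x₀ + dist x₀ x := dist_triangle _ _ _
        _ < ε / 2 + ε / 2 := add_lt_add (mem_ball.1 hw) (mem_ball'.1 hx₀)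
        _ = ε := by ring
    exact mem_ball.2 this
end

section
/- Let π : X → Y be a quotient map from a metric space X whose closed balls are compact to a topological space Y, and fix L ≥ 1, α ∈ (0,1), a compact set K ⊆ X, a compact set K' ⊆ Y containing a fixed point y₀. Then the family {φ|_{K'} : φ is an intrinsically (L,α)-Hölder section of π with d(φ(y₁),φ(y₂)) ≤ L·d(φ(y₁),π⁻¹(y₂))^α, and φ(y₀) ∈ K} is equibounded: there exists a compact set in X containing φ(y) for all such φ and all y ∈ K'. Explicitly, for any x₀ ∈ K, d(x₀, φ(y)) ≤ diam(K) + L·max_{x∈K} d(π⁻¹(y), x)^α. -/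
open Metric Set

/-!
Fix `x' ∈ K`. Since `π` is open, `y ↦ d(x', π⁻¹ y)` is upper semicontinuous, hence bounded by
some `B` on the compact set `K'`. The Hölder condition applied to the pair `(y₀, y)` gives
`d(φ y₀, φ y) ≤ L · d(φ y₀, π⁻¹ y)^α`, and `d(φ y₀, π⁻¹ y) ≤ diam K + B` because `φ y₀ ∈ K`.
So every `φ y`, `y ∈ K'`, lies in a fixed closed ball around `x'`, which is compact.
-/

section

variable {X Y : Type*} [MetricSpace X]

theorem upperSemicontinuous_infDist_fiber [TopologicalSpace Y] {π : X → Y} (hπo : IsOpenMap π)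
    (hπs : Function.Surjective π) (x : X) :
    UpperSemicontinuous fun y => infDist x (π ⁻¹' {y}) := by
  intro y c hc
  obtain ⟨p, hp, hpc⟩ := (infDist_lt_iff ((hπs y).imp fun _ h => h)).1 hc
  have hnhds : π '' ball p (c - dist x p) ∈ nhds y :=
    (hπo _ isOpen_ball).mem_nhds ⟨p, mem_ball_self (sub_pos.2 hpc), hp⟩
  filter_upwards [hnhds]
  rintro _ ⟨q, hq, rfl⟩
  calc infDist x (π ⁻¹' {π q}) ≤ dist x q := infDist_le_dist_of_mem rfl
    _ ≤ dist x p + dist p q := dist_triangle _ _ _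
    _ < c := by rw [mem_ball, dist_comm] at hq; linarith

theorem le_biSup_of_isCompact {f : X → ℝ} (hf : Continuous f) {K : Set X} (hK : IsCompact K)
    {x : X} (hx : x ∈ K) : f x ≤ ⨆ y ∈ K, f y := by
  refine le_ciSup₂ (f := fun y (_ : y ∈ K) => f y)
    ((hK.bddAbove_image hf.continuousOn).mono ?_) x hx
  rintro _ ⟨_, ⟨y, rfl⟩, ⟨hy, rfl⟩⟩
  exact mem_image_of_mem f hy

theorem dist_le_add_mul_infDist_rpow {π : X → Y} {L α : ℝ} {φ : Y → X}
    (hφ : ∀ y₁ y₂ : Y, dist (φ y₁) (φ y₂) ≤ L * (infDist (φ y₁) (π ⁻¹' {y₂})) ^ α)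
    (x₀ : X) (y₀ y : Y) :
    dist x₀ (φ y) ≤ dist x₀ (φ y₀) + L * (infDist (φ y₀) (π ⁻¹' {y})) ^ α :=
  (dist_triangle _ _ _).trans (add_le_add_right (hφ y₀ y) _)

end

theorem stmt12_general {X Y : Type*} [MetricSpace X] [ProperSpace X] [TopologicalSpace Y]
    (π : X → Y) (hπo : IsOpenMap π) (hπs : Function.Surjective π)
    (L α : ℝ) (hL : 1 ≤ L) (hα : α ∈ Set.Ioo (0:ℝ) 1)
    (K : Set X) (hK : IsCompact K) (K' : Set Y) (hK' : IsCompact K')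
    (y₀ : Y) :
    (∃ C : Set X, IsCompact C ∧ ∀ φ : Y → X, (∀ y, π (φ y) = y) →
      (∀ y₁ y₂ : Y, dist (φ y₁) (φ y₂) ≤ L * (infDist (φ y₁) (π ⁻¹' {y₂})) ^ α) →
      φ y₀ ∈ K → ∀ y ∈ K', φ y ∈ C) ∧
    (∀ x₀ ∈ K, ∀ φ : Y → X, (∀ y, π (φ y) = y) →
      (∀ y₁ y₂ : Y, dist (φ y₁) (φ y₂) ≤ L * (infDist (φ y₁) (π ⁻¹' {y₂})) ^ α) →
      φ y₀ ∈ K → ∀ y ∈ K',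
        dist x₀ (φ y) ≤ diam K + L * (⨆ x ∈ K, (infDist x (π ⁻¹' {y})) ^ α)) := by
  have hL0 : 0 ≤ L := zero_le_one.trans hL
  have hα0 : 0 ≤ α := hα.1.le
  refine ⟨?_, fun x₀ hx₀ φ _ hφ hφK y _ => ?_⟩
  · obtain rfl | ⟨x', hx'⟩ := K.eq_empty_or_nonempty
    · exact ⟨∅, isCompact_empty, fun φ _ _ hφK => absurd hφK (notMem_empty _)⟩
    obtain ⟨B, hB⟩ := ((upperSemicontinuous_infDist_fiber hπo hπs x').upperSemicontinuousOn
      K').bddAbove_of_isCompact hK'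
    refine ⟨closedBall x' (diam K + L * (diam K + B) ^ α), isCompact_closedBall _ _,
      fun φ _ hφ hφK y hy => ?_⟩
    have hφy₀ : dist x' (φ y₀) ≤ diam K := dist_le_diam_of_mem hK.isBounded hx' hφK
    have hfiber : infDist (φ y₀) (π ⁻¹' {y}) ≤ diam K + B := by
      rw [dist_comm] at hφy₀
      linarith [infDist_le_infDist_add_dist (x := φ y₀) (y := x') (s := π ⁻¹' {y}),
        hB (mem_image_of_mem _ hy)]
    rw [mem_closedBall, dist_comm]
    calc dist x' (φ y) ≤ dist x' (φ y₀) + L * (infDist (φ y₀) (π ⁻¹' {y})) ^ α :=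
          dist_le_add_mul_infDist_rpow hφ x' y₀ y
      _ ≤ diam K + L * (diam K + B) ^ α := by
        gcongr; exact infDist_nonneg
  · calc dist x₀ (φ y) ≤ dist x₀ (φ y₀) + L * (infDist (φ y₀) (π ⁻¹' {y})) ^ α :=
          dist_le_add_mul_infDist_rpow hφ x₀ y₀ y
      _ ≤ diam K + L * (⨆ x ∈ K, (infDist x (π ⁻¹' {y})) ^ α) := by
        gcongr
        · exact dist_le_diam_of_mem hK.isBounded hx₀ hφK
        · exact le_biSup_of_isCompact (f := fun x => infDist x (π ⁻¹' {y}) ^ α)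
            ((continuous_infDist_pt _).rpow_const fun _ => Or.inr hα0) hK hφK

/-- Equiboundedness: the family of restrictions to a compact `K' ⊆ Y` of intrinsically
`(L,α)`-Hölder sections with `φ y₀ ∈ K` is contained in a common compact set, with the
explicit bound `d(x₀, φ y) ≤ diam K + L · max_{x ∈ K} d(x, π⁻¹ y)^α`. -/
theorem stmt12 {X Y : Type*} [MetricSpace X] [ProperSpace X] [TopologicalSpace Y]
    (π : X → Y) (hπc : Continuous π) (hπo : IsOpenMap π) (hπs : Function.Surjective π)
    (L α : ℝ) (hL : 1 ≤ L) (hα : α ∈ Set.Ioo (0:ℝ) 1)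
    (K : Set X) (hK : IsCompact K) (K' : Set Y) (hK' : IsCompact K')
    (y₀ : Y) (hy₀ : y₀ ∈ K') :
    (∃ C : Set X, IsCompact C ∧ ∀ φ : Y → X, (∀ y, π (φ y) = y) →
      (∀ y₁ y₂ : Y, dist (φ y₁) (φ y₂) ≤ L * (infDist (φ y₁) (π ⁻¹' {y₂})) ^ α) →
      φ y₀ ∈ K → ∀ y ∈ K', φ y ∈ C) ∧
    (∀ x₀ ∈ K, ∀ φ : Y → X, (∀ y, π (φ y) = y) →
      (∀ y₁ y₂ : Y, dist (φ y₁) (φ y₂) ≤ L * (infDist (φ y₁) (π ⁻¹' {y₂})) ^ α) →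
      φ y₀ ∈ K → ∀ y ∈ K',
        dist x₀ (φ y) ≤ diam K + L * (⨆ x ∈ K, (infDist x (π ⁻¹' {y})) ^ α)) :=
  stmt12_general π hπo hπs L α hL hα K hK K' hK' y₀
end

section
/- Let π : X → Y be a quotient map from a metric space X whose closed balls are compact to a topological space Y. Then for all L ≥ 1, α ∈ (0,1), compact K' ⊆ Y, compact K ⊆ X, y₀ ∈ Y, the family of restrictions to K' of intrinsically (L,α)-Hölder sections φ with φ(y₀) ∈ K is equicontinuous: for every y ∈ K' and ε > 0 there is a neighborhood U of y such that d(φ(y), φ(y')) ≤ ε for all y' ∈ U and all such φ, with the neighborhood independent of φ. -/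
open Metric Set

/-- Equicontinuity: for every `y ∈ K'` and `ε > 0` there is a neighborhood `U` of `y`,
independent of `φ`, such that `d(φ y, φ y') ≤ ε` for every `y' ∈ U` and every
intrinsically `(L,α)`-Hölder section `φ` with `φ y₀ ∈ K`. -/
theorem stmt13 {X Y : Type*} [MetricSpace X] [ProperSpace X] [TopologicalSpace Y]
    (π : X → Y) (hπc : Continuous π) (hπo : IsOpenMap π) (hπs : Function.Surjective π)
    (L α : ℝ) (hL : 1 ≤ L) (hα : α ∈ Set.Ioo (0:ℝ) 1)
    (K : Set X) (hK : IsCompact K) (K' : Set Y) (hK' : IsCompact K')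
    (y₀ : Y) (hy₀ : y₀ ∈ K') :
    ∀ y ∈ K', ∀ ε > (0:ℝ), ∃ U : Set Y, IsOpen U ∧ y ∈ U ∧
      ∀ φ : Y → X, (∀ y', π (φ y') = y') →
      (∀ y₁ y₂ : Y, dist (φ y₁) (φ y₂) ≤ L * (infDist (φ y₁) (π ⁻¹' {y₂})) ^ α) →
      φ y₀ ∈ K → ∀ y' ∈ U, dist (φ y) (φ y') ≤ ε := by
  intro y _hy ε hε
  have hL0 : (0:ℝ) < L := lt_of_lt_of_le one_pos hL
  have hα0 : (0:ℝ) < α := hα.1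
  -- point over y
  obtain ⟨x₀, hx₀⟩ := hπs y
  -- K is bounded: K ⊆ closedBall x₀ C with C ≥ 0
  obtain ⟨r, hr⟩ := hK.isBounded.subset_closedBall x₀
  set C : ℝ := max r 0 with hC
  have hC0 : (0:ℝ) ≤ C := le_max_right _ _
  have hKC : K ⊆ closedBall x₀ C := hr.trans (closedBall_subset_closedBall (le_max_left _ _))
  -- radius bound for φ y
  set R : ℝ := L * C ^ α + C with hR
  -- the slab over y
  set S : Set X := closedBall x₀ R ∩ π ⁻¹' {y} with hS
  have hStb : TotallyBounded S :=
    ((isCompact_closedBall x₀ R).totallyBounded).subset inter_subset_left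
  -- δ such that L * δ ^ α ≤ ε
  set δ : ℝ := (ε / L) ^ (1 / α) with hδdef
  have hεL : (0:ℝ) < ε / L := div_pos hε hL0
  have hδ0 : (0:ℝ) < δ := Real.rpow_pos_of_pos hεL _
  have hδε : L * δ ^ α ≤ ε := by
    have hpow : δ ^ α = ε / L := by
      rw [hδdef, ← Real.rpow_mul hεL.le, one_div_mul_cancel hα0.ne', Real.rpow_one]
    rw [hpow]
    field_simp
    exact le_rfl
  obtain ⟨t, hts, htfin, htcov⟩ := finite_approx_of_totallyBounded hStb (δ / 2) (by linarith)
  refine ⟨⋂ x ∈ t, π '' ball x (δ / 2), ?_, ?_, ?_⟩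
  · exact htfin.isOpen_biInter fun x _ => hπo _ isOpen_ball
  · refine mem_iInter₂.2 fun x hx => ?_
    have hxy : π x = y := (hts hx).2
    exact ⟨x, mem_ball_self (by linarith), hxy⟩
  · intro φ hsec hhold hφK y' hy'
    -- φ y lies in S
    have hφy₀ : dist (φ y₀) x₀ ≤ C := hKC hφK
    have hinf : infDist (φ y₀) (π ⁻¹' {y}) ≤ C :=
      le_trans (infDist_le_dist_of_mem (by simp [hx₀])) hφy₀
    have h1 : dist (φ y₀) (φ y) ≤ L * C ^ α := by
      refine le_trans (hhold y₀ y) ?_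
      exact mul_le_mul_of_nonneg_left
        (Real.rpow_le_rpow infDist_nonneg hinf hα0.le) hL0.le
    have hφyS : φ y ∈ S := by
      constructor
      · rw [mem_closedBall]
        calc dist (φ y) x₀ ≤ dist (φ y) (φ y₀) + dist (φ y₀) x₀ := dist_triangle _ _ _
          _ ≤ L * C ^ α + C := by rw [dist_comm]; exact add_le_add h1 hφy₀
      · simp [hsec y]
    obtain ⟨x⟩ := mem_iUnion.1 (htcov hφyS)
    obtain ⟨hxt, hφx⟩ := mem_iUnion.1 ‹_›
    -- y' has a preimage near φ y
    obtain ⟨x', hx'ball, hx'y'⟩ := mem_iInter₂.1 hy' x hxt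
    have hdist : dist (φ y) x' ≤ δ := by
      have h2 : dist (φ y) x < δ / 2 := mem_ball.1 hφx
      have h3 : dist x x' < δ / 2 := by rw [dist_comm]; exact mem_ball.1 hx'ball
      calc dist (φ y) x' ≤ dist (φ y) x + dist x x' := dist_triangle _ _ _
        _ ≤ δ := by linarith
    have hinf' : infDist (φ y) (π ⁻¹' {y'}) ≤ δ :=
      le_trans (infDist_le_dist_of_mem (by simp [hx'y'])) hdist
    calc dist (φ y) (φ y') ≤ L * infDist (φ y) (π ⁻¹' {y'}) ^ α := hhold y y'
      _ ≤ L * δ ^ α := mul_le_mul_of_nonneg_left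
          (Real.rpow_le_rpow infDist_nonneg hinf' hα0.le) hL0.le
      _ ≤ ε := hδε
end

section
/- Let π : X → Y be a quotient map between a metric space X and a topological space Y, equipped with a measure μ on Y such that for some r₀ > 0 and all x, x' ∈ X with π(x) = π(x'), there is C > 0 with μ(π(B(x,r))) ≤ C·μ(π(B(x',r))) for all r ∈ (0, r₀). Suppose φ : Y → X is an intrinsically (L,α)-Hölder section such that φ(Y) is locally (ℓ+1−α)-Ahlfors–David regular with respect to the pushforward measure φ_*μ. Then any intrinsically (L,α)-Hölder section ψ : Y → X satisfies the upper bound ψ_*μ(B(ψ(y), r) ∩ ψ(Y)) ≤ c₁·C·(L+1)^{ℓ+1−α}·r^{α(ℓ+1−α)} for all y ∈ Y and r ∈ (0, min(r₀,1)), where c₁ is the upper Ahlfors constant of φ. -/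
open Metric Set MeasureTheory

/-! The Hölder condition on `φ` sends the projection of an `r`-ball around `φ y` into the
`(L+1) r^α`-ball around `φ y` on the graph of `φ`, so that
`ψ_*μ(B(ψ y, r)) ≤ μ(π B(ψ y, r)) ≤ C μ(π B(φ y, r)) ≤ C φ_*μ(B(φ y, (L+1) r^α))`,
and the Ahlfors–David bound for `φ` at radius `(L+1) r^α` finishes the estimate. -/

def IsIntrinsicHolderSection {X Y : Type*} [MetricSpace X] (π : X → Y) (L α : ℝ)
    (φ : Y → X) : Prop :=
  ∀ y₁ y₂ : Y, dist (φ y₁) (φ y₂) ≤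
    L * (infDist (φ y₁) (π ⁻¹' {y₂})) ^ α + infDist (φ y₁) (π ⁻¹' {y₂})

lemma mul_rpow_add_lt_add_one_mul_rpow {L α d r : ℝ} (hL : 0 ≤ L) (hα₀ : 0 < α)
    (hα₁ : α ≤ 1) (hd₀ : 0 ≤ d) (hdr : d < r) (hr₁ : r ≤ 1) :
    L * d ^ α + d < (L + 1) * r ^ α := by
  have hpow : d ^ α < r ^ α := Real.rpow_lt_rpow hd₀ hdr hα₀
  have hr : r ≤ r ^ α := Real.self_le_rpow_of_le_one (hd₀.trans hdr.le) hr₁ hα₁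
  linarith [mul_le_mul_of_nonneg_left hpow.le hL]

lemma IsIntrinsicHolderSection.image_ball_subset {X Y : Type*} [MetricSpace X]
    {π : X → Y} {L α : ℝ} {φ : Y → X} (hφ : IsIntrinsicHolderSection π L α φ)
    (hL : 0 ≤ L) (hα₀ : 0 < α) (hα₁ : α ≤ 1) (y : Y) {r : ℝ} (hr₁ : r ≤ 1) :
    π '' ball (φ y) r ⊆ φ ⁻¹' ball (φ y) ((L + 1) * r ^ α) := by
  rintro _ ⟨x, hx, rfl⟩
  have hfiber : infDist (φ y) (π ⁻¹' {π x}) < r :=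
    (infDist_le_dist_of_mem (mem_preimage.2 (mem_singleton (π x)))).trans_lt (mem_ball'.mp hx)
  rw [mem_preimage, mem_ball']
  exact (hφ y (π x)).trans_lt
    (mul_rpow_add_lt_add_one_mul_rpow hL hα₀ hα₁ infDist_nonneg hfiber hr₁)

theorem stmt16_general {X Y : Type*} [MetricSpace X] [TopologicalSpace Y] [MeasurableSpace Y]
    (π : X → Y)
    (μ : Measure Y) (r₀ C : ℝ) (hC : 0 < C)
    (hcmp : ∀ x x' : X, π x = π x' → ∀ r : ℝ, 0 < r → r < r₀ →
      μ (π '' ball x r) ≤ ENNReal.ofReal C * μ (π '' ball x' r))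
    (L α ℓ c₁ : ℝ) (hL : 0 < L) (hα : α ∈ Set.Ioo (0:ℝ) 1)
    (φ : Y → X) (hφsec : ∀ y, π (φ y) = y)
    (hφ : ∀ y₁ y₂ : Y, dist (φ y₁) (φ y₂) ≤
      L * (infDist (φ y₁) (π ⁻¹' {y₂})) ^ α + infDist (φ y₁) (π ⁻¹' {y₂}))
    (hAD : ∀ y : Y, ∀ r : ℝ, 0 < r →
      μ (φ ⁻¹' (ball (φ y) r ∩ Set.range φ)) ≤ ENNReal.ofReal (c₁ * r ^ (ℓ + 1 - α)))
    (ψ : Y → X) (hψsec : ∀ y, π (ψ y) = y) :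
    ∀ y : Y, ∀ r : ℝ, 0 < r → r < min r₀ 1 →
      μ (ψ ⁻¹' (ball (ψ y) r ∩ Set.range ψ)) ≤
        ENNReal.ofReal (c₁ * C * (L + 1) ^ (ℓ + 1 - α) * r ^ (α * (ℓ + 1 - α))) := by
  intro y r hr hrlt
  have hR : 0 < (L + 1) * r ^ α := by positivity
  calc μ (ψ ⁻¹' (ball (ψ y) r ∩ range ψ))
      ≤ μ (π '' ball (ψ y) r) := by
        rw [preimage_inter_range]
        exact measure_mono (preimage_subset_image_of_inverse hψsec _)
    _ ≤ ENNReal.ofReal C * μ (π '' ball (φ y) r) :=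
        hcmp _ _ (by rw [hψsec, hφsec]) r hr (hrlt.trans_le (min_le_left _ _))
    _ ≤ ENNReal.ofReal C * μ (φ ⁻¹' (ball (φ y) ((L + 1) * r ^ α) ∩ range φ)) := by
        rw [preimage_inter_range]
        gcongr
        exact IsIntrinsicHolderSection.image_ball_subset hφ hL.le hα.1 hα.2.le y
          (hrlt.le.trans (min_le_right _ _))
    _ ≤ ENNReal.ofReal C * ENNReal.ofReal (c₁ * ((L + 1) * r ^ α) ^ (ℓ + 1 - α)) := by
        gcongr
        exact hAD y _ hR
    _ = ENNReal.ofReal (c₁ * C * (L + 1) ^ (ℓ + 1 - α) * r ^ (α * (ℓ + 1 - α))) := by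
        rw [← ENNReal.ofReal_mul hC.le, Real.mul_rpow (by positivity) (by positivity),
          ← Real.rpow_mul hr.le]
        ring_nf

/-- Ahlfors–David regularity (upper bound): if the graph of an intrinsically
`(L,α)`-Hölder section `φ` is upper `(ℓ+1-α)`-Ahlfors regular for the pushforward of `μ`,
and the measures of projected balls centered on the same fiber are comparable, then any
intrinsically `(L,α)`-Hölder section `ψ` satisfies the corresponding upper bound with
exponent `α(ℓ+1-α)`. -/
theorem stmt16 {X Y : Type*} [MetricSpace X] [TopologicalSpace Y] [MeasurableSpace Y]
    (π : X → Y) (hπc : Continuous π) (hπo : IsOpenMap π) (hπs : Function.Surjective π)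
    (μ : Measure Y) (r₀ C : ℝ) (hr₀ : 0 < r₀) (hC : 0 < C)
    (hcmp : ∀ x x' : X, π x = π x' → ∀ r : ℝ, 0 < r → r < r₀ →
      μ (π '' ball x r) ≤ ENNReal.ofReal C * μ (π '' ball x' r))
    (L α ℓ c₁ : ℝ) (hL : 0 < L) (hα : α ∈ Set.Ioo (0:ℝ) 1) (hℓ : 0 < ℓ) (hc₁ : 0 < c₁)
    (φ : Y → X) (hφsec : ∀ y, π (φ y) = y)
    (hφ : ∀ y₁ y₂ : Y, dist (φ y₁) (φ y₂) ≤
      L * (infDist (φ y₁) (π ⁻¹' {y₂})) ^ α + infDist (φ y₁) (π ⁻¹' {y₂}))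
    (hAD : ∀ y : Y, ∀ r : ℝ, 0 < r →
      μ (φ ⁻¹' (ball (φ y) r ∩ Set.range φ)) ≤ ENNReal.ofReal (c₁ * r ^ (ℓ + 1 - α)))
    (ψ : Y → X) (hψsec : ∀ y, π (ψ y) = y)
    (hψ : ∀ y₁ y₂ : Y, dist (ψ y₁) (ψ y₂) ≤
      L * (infDist (ψ y₁) (π ⁻¹' {y₂})) ^ α + infDist (ψ y₁) (π ⁻¹' {y₂})) :
    ∀ y : Y, ∀ r : ℝ, 0 < r → r < min r₀ 1 →
      μ (ψ ⁻¹' (ball (ψ y) r ∩ Set.range ψ)) ≤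
        ENNReal.ofReal (c₁ * C * (L + 1) ^ (ℓ + 1 - α) * r ^ (α * (ℓ + 1 - α))) :=
  stmt16_general π μ r₀ C hC hcmp L α ℓ c₁ hL hα φ hφsec hφ hAD ψ hψsec
end
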